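/- arXiv:1506.07453 — 3 statements merged into one kernel-verified Lean document; each statement's English description precedes it below -/
import Mathlib

section
/- Let ξ and η be independent identically distributed real random variables with distribution function F, and let t > 0 be such that P(|ξ| < t) ≥ 1/2. Then the symmetrized variable ξ − η satisfies E[(ξ−η)² · 1_{|ξ−η| < 2t}] ≥ E[ξ² · 1_{|ξ| < t}] − 2 (E[ξ · 1_{|ξ| < t}])². -/
/-!
On the event `{|ξ| < t} ∩ {|η| < t}` one has `|ξ - η| < 2t`, so
`E[(ξ - η)² 1_{|ξ - η| < 2t}] ≥ E[(ξ - η)² 1_{|ξ| < t} 1_{|η| < t}]`. Expanding the square and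
using independence and equal laws, the latter equals
`2 P(|ξ| < t) E[ξ² 1_{|ξ| < t}] - 2 (E[ξ 1_{|ξ| < t}])²`, and `P(|ξ| < t) ≥ 1/2` finishes the proof.
-/

open MeasureTheory ProbabilityTheory

noncomputable def truncate (t : ℝ) (f : ℝ → ℝ) (x : ℝ) : ℝ := if |x| < t then f x else 0

section Truncate

variable {t : ℝ} {f : ℝ → ℝ}

lemma measurable_truncate (hf : Measurable f) : Measurable (truncate t f) :=
  Measurable.ite (measurableSet_lt measurable_id.abs measurable_const) hf measurable_const

lemma truncate_nonneg (hf : ∀ x, 0 ≤ f x) (x : ℝ) : 0 ≤ truncate t f x := by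
  unfold truncate
  split_ifs
  exacts [hf x, le_rfl]

lemma exists_abs_truncate_le (hf : Continuous f) : ∃ C, ∀ x, |truncate t f x| ≤ C := by
  obtain ⟨C, hC⟩ := (isCompact_Icc (a := -|t|) (b := |t|)).exists_bound_of_continuousOn
    hf.continuousOn
  refine ⟨max C 0, fun x => ?_⟩
  unfold truncate
  split_ifs with hx
  · exact (hC x (abs_le.mp (hx.le.trans (le_abs_self t)))).trans (le_max_left C 0)
  · simp

lemma truncate_one_mul_truncate_one_mul_sq_sub (t x y : ℝ) :
    truncate t 1 x * truncate t 1 y * (x - y) ^ 2 =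
      truncate t (· ^ 2) x * truncate t 1 y + truncate t 1 x * truncate t (· ^ 2) y
        - 2 * (truncate t id x * truncate t id y) := by
  simp only [truncate, Pi.one_apply, id]
  split_ifs <;> ring

lemma truncate_one_mul_truncate_one_mul_sq_sub_le (t x y : ℝ) :
    truncate t 1 x * truncate t 1 y * (x - y) ^ 2 ≤ truncate (2 * t) (· ^ 2) (x - y) := by
  unfold truncate
  by_cases hx : |x| < t <;> by_cases hy : |y| < t
  · have hxy : |x - y| < 2 * t := (abs_sub x y).trans_lt (by linarith)
    simp [hx, hy, hxy]
  all_goals simp only [hx, hy, if_true, if_false, zero_mul, mul_zero]; split_ifs <;> positivity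

end Truncate

section Integrals

variable {Ω : Type*} [MeasurableSpace Ω] {μ : Measure Ω} {ξ η : Ω → ℝ} {f g : ℝ → ℝ}

lemma integral_truncate_one_comp (t : ℝ) (hξ : AEMeasurable ξ μ) :
    ∫ ω, truncate t 1 (ξ ω) ∂μ = (μ {ω | |ξ ω| < t}).toReal := by
  have hs : NullMeasurableSet {ω | |ξ ω| < t} μ :=
    nullMeasurableSet_lt hξ.abs aemeasurable_const
  have : (fun ω => truncate t 1 (ξ ω)) = {ω | |ξ ω| < t}.indicator fun _ => 1 := by
    ext ω
    simp [truncate, Set.indicator]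
  rw [this, integral_indicator₀ hs, setIntegral_const, smul_eq_mul, mul_one, measureReal_def]

lemma integrable_truncate_comp [IsFiniteMeasure μ] (t : ℝ) (hf : Continuous f)
    (hξ : AEMeasurable ξ μ) : Integrable (fun ω => truncate t f (ξ ω)) μ := by
  obtain ⟨C, hC⟩ := exists_abs_truncate_le (t := t) hf
  exact .of_bound ((measurable_truncate hf.measurable).comp_aemeasurable hξ).aestronglyMeasurable
    C (.of_forall fun ω => hC (ξ ω))

lemma integrable_truncate_comp_mul [IsFiniteMeasure μ] (t : ℝ) (hf : Continuous f)
    (hg : Continuous g) (hξ : AEMeasurable ξ μ) (hη : AEMeasurable η μ) :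
    Integrable (fun ω => truncate t f (ξ ω) * truncate t g (η ω)) μ := by
  obtain ⟨C, hC⟩ := exists_abs_truncate_le (t := t) hf
  exact (integrable_truncate_comp t hg hη).bdd_mul
    ((measurable_truncate hf.measurable).comp_aemeasurable hξ).aestronglyMeasurable
    (.of_forall fun ω => hC (ξ ω))

lemma ProbabilityTheory.IndepFun.integral_comp_mul_comp_of_identDistrib (hindep : IndepFun ξ η μ)
    (hid : IdentDistrib ξ η μ μ) (hf : Measurable f) (hg : Measurable g) :
    ∫ ω, f (ξ ω) * g (η ω) ∂μ = (∫ ω, f (ξ ω) ∂μ) * ∫ ω, g (ξ ω) ∂μ := by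
  rw [show ∫ ω, g (ξ ω) ∂μ = ∫ ω, g (η ω) ∂μ from (hid.comp hg).integral_eq]
  exact (hindep.comp hf hg).integral_mul_eq_mul_integral
    (hf.comp_aemeasurable hid.aemeasurable_fst).aestronglyMeasurable
    (hg.comp_aemeasurable hid.aemeasurable_snd).aestronglyMeasurable

lemma integral_truncate_one_mul_truncate_one_mul_sq_sub [IsFiniteMeasure μ]
    (hindep : IndepFun ξ η μ) (hid : IdentDistrib ξ η μ μ) (t : ℝ) :
    ∫ ω, truncate t 1 (ξ ω) * truncate t 1 (η ω) * (ξ ω - η ω) ^ 2 ∂μ =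
      2 * (∫ ω, truncate t (· ^ 2) (ξ ω) ∂μ) * (μ {ω | |ξ ω| < t}).toReal
        - 2 * (∫ ω, truncate t id (ξ ω) ∂μ) ^ 2 := by
  have hsq : Continuous fun x : ℝ => x ^ 2 := by fun_prop
  have hprod (f g : ℝ → ℝ) (hf : Measurable f) (hg : Measurable g) :=
    hindep.integral_comp_mul_comp_of_identDistrib hid (measurable_truncate (t := t) hf)
      (measurable_truncate (t := t) hg)
  have hint (f g : ℝ → ℝ) (hf : Continuous f) (hg : Continuous g) :=
    integrable_truncate_comp_mul t hf hg hid.aemeasurable_fst hid.aemeasurable_snd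
  have h20 := hint (· ^ 2) 1 hsq continuous_one
  have h02 := hint 1 (· ^ 2) continuous_one hsq
  simp_rw [truncate_one_mul_truncate_one_mul_sq_sub]
  rw [integral_sub, integral_add h20 h02, integral_const_mul,
    hprod _ _ hsq.measurable measurable_one, hprod _ _ measurable_one hsq.measurable,
    hprod _ _ measurable_id measurable_id, integral_truncate_one_comp t hid.aemeasurable_fst]
  · ring
  · exact h20.add h02
  · exact (hint id id continuous_id continuous_id).const_mul 2

end Integrals

theorem symmetrized_truncated_second_moment_lower_bound_general
    {Ω : Type*} [MeasureSpace Ω] [IsProbabilityMeasure (ℙ : Measure Ω)]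
    (ξ η : Ω → ℝ)
    (hindep : IndepFun ξ η ℙ) (hid : IdentDistrib ξ η ℙ ℙ)
    (t : ℝ)
    (hhalf : (1 : ℝ) / 2 ≤ (ℙ {ω | |ξ ω| < t}).toReal) :
    (∫ ω, if |ξ ω| < t then (ξ ω) ^ 2 else 0) -
        2 * (∫ ω, if |ξ ω| < t then ξ ω else 0) ^ 2 ≤
      ∫ ω, if |ξ ω - η ω| < 2 * t then (ξ ω - η ω) ^ 2 else 0 := by
  show (∫ ω, truncate t (· ^ 2) (ξ ω)) - 2 * (∫ ω, truncate t id (ξ ω)) ^ 2 ≤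
    ∫ ω, truncate (2 * t) (· ^ 2) (ξ ω - η ω)
  have ha : 0 ≤ ∫ ω, truncate t (· ^ 2) (ξ ω) :=
    integral_nonneg fun ω => truncate_nonneg sq_nonneg (ξ ω)
  calc _ ≤ 2 * (∫ ω, truncate t (· ^ 2) (ξ ω)) * (ℙ {ω | |ξ ω| < t}).toReal
          - 2 * (∫ ω, truncate t id (ξ ω)) ^ 2 := by nlinarith
    _ = ∫ ω, truncate t 1 (ξ ω) * truncate t 1 (η ω) * (ξ ω - η ω) ^ 2 :=
        (integral_truncate_one_mul_truncate_one_mul_sq_sub hindep hid t).symm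
    _ ≤ _ := integral_mono_of_nonneg
        (.of_forall fun ω => mul_nonneg (mul_nonneg (truncate_nonneg (fun _ => zero_le_one) _)
          (truncate_nonneg (fun _ => zero_le_one) _)) (sq_nonneg _))
        (integrable_truncate_comp _ (by fun_prop) (hid.aemeasurable_fst.sub hid.aemeasurable_snd))
        (.of_forall fun ω => truncate_one_mul_truncate_one_mul_sq_sub_le t (ξ ω) (η ω))

theorem symmetrized_truncated_second_moment_lower_bound
    {Ω : Type*} [MeasureSpace Ω] [IsProbabilityMeasure (ℙ : Measure Ω)]
    (ξ η : Ω → ℝ) (hmξ : Measurable ξ) (hmη : Measurable η)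
    (hindep : IndepFun ξ η ℙ) (hid : IdentDistrib ξ η ℙ ℙ)
    (t : ℝ) (ht : 0 < t)
    (hhalf : (1 : ℝ) / 2 ≤ (ℙ {ω | |ξ ω| < t}).toReal) :
    (∫ ω, if |ξ ω| < t then (ξ ω) ^ 2 else 0) -
        2 * (∫ ω, if |ξ ω| < t then ξ ω else 0) ^ 2 ≤
      ∫ ω, if |ξ ω - η ω| < 2 * t then (ξ ω - η ω) ^ 2 else 0 :=
  symmetrized_truncated_second_moment_lower_bound_general ξ η hindep hid t hhalf
end

section
/- Let 1 ≤ p < 2. There exists an absolute constant C > 0 such that for every i.i.d. sequence ξ₁, …, ξ_k of centered square-integrable random variables and all reals a₁, …, a_k: C · ‖ξ₁‖₁ · (∑_{i=1}^k a_i²)^{1/2} ≤ ‖∑_{i=1}^k a_i ξ_i‖_p. -/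
/-!
Since `‖·‖₁ ≤ ‖·‖ₚ` on a probability space, it suffices to take `p = 1`. Let `ξ'` be an
independent copy of `ξ`. By the triangle inequality `E|∑ aᵢ(ξᵢ - ξᵢ')| ≤ 2 E|∑ aᵢ ξᵢ|`, and since
`ξ₀` is centered, Jensen's inequality in `ξ₀'` gives `E|ξ₀| ≤ E|ξ₀ - ξ₀'|`. The differences
`ηᵢ = ξᵢ - ξᵢ'` are symmetric, so `∑ aᵢ ηᵢ` has the same law as `∑ εᵢ aᵢ ηᵢ` for every choice of
signs `εᵢ = ±1`. Averaging over all `2^k` sign patterns, Khintchine's inequality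
`2^{-k} ∑_ε |∑ εᵢ cᵢ| ≥ (∑ cᵢ²)^{1/2} / √3` (from the second and fourth moments of Rademacher sums)
applied to `cᵢ = aᵢ ηᵢ`, combined with the Cauchy–Schwarz bound
`∑ aᵢ² |ηᵢ| ≤ (∑ aᵢ²)^{1/2} (∑ aᵢ² ηᵢ²)^{1/2}`, yields `E|η₀| (∑ aᵢ²)^{1/2} ≤ √3 E|∑ aᵢ ηᵢ|`.
Hence `C = 1/(2√3)` works.
-/

open MeasureTheory ProbabilityTheory Finset

variable {ι : Type*} [Fintype ι]

noncomputable def boolSign (b : Bool) : ℝ := if b then 1 else -1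

@[simp] lemma boolSign_true : boolSign true = 1 := rfl
@[simp] lemma boolSign_false : boolSign false = -1 := rfl

lemma sum_pi_bool_succ {M : Type*} [AddCommMonoid M] {k : ℕ} (F : (Fin (k + 1) → Bool) → M) :
    ∑ s, F s = ∑ t : Fin k → Bool, (F (Fin.cons true t) + F (Fin.cons false t)) := by
  rw [← (Fin.consEquiv fun _ => Bool).sum_comp F, Fintype.sum_prod_type, Fintype.sum_bool,
    ← sum_add_distrib]
  rfl

lemma sum_boolSign_cons_mul (b : Bool) {k : ℕ} (t : Fin k → Bool) (c : Fin (k + 1) → ℝ) :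
    ∑ i, boolSign ((Fin.cons b t : Fin (k + 1) → Bool) i) * c i
      = boolSign b * c 0 + ∑ i : Fin k, boolSign (t i) * c i.succ := by
  simp [Fin.sum_univ_succ]

lemma sum_boolSign_sum_mul_sq {k : ℕ} (c : Fin k → ℝ) :
    ∑ s : Fin k → Bool, (∑ i, boolSign (s i) * c i) ^ 2 = 2 ^ k * ∑ i, c i ^ 2 := by
  induction k with
  | zero => simp
  | succ k ih =>
    simp only [sum_pi_bool_succ, sum_boolSign_cons_mul, boolSign_true, boolSign_false]
    have ih' := ih fun i => c i.succ
    simp only [show ∀ x y : ℝ, (1 * x + y) ^ 2 + (-1 * x + y) ^ 2 = 2 * x ^ 2 + 2 * y ^ 2 from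
      fun x y => by ring, sum_add_distrib, ← mul_sum, sum_const, card_univ, Fintype.card_pi,
      Fintype.card_bool, prod_const, Fintype.card_fin, nsmul_eq_mul, ih', Fin.sum_univ_succ]
    push_cast
    ring

lemma sum_boolSign_sum_mul_pow_four_le {k : ℕ} (c : Fin k → ℝ) :
    ∑ s : Fin k → Bool, (∑ i, boolSign (s i) * c i) ^ 4 ≤ 3 * 2 ^ k * (∑ i, c i ^ 2) ^ 2 := by
  induction k with
  | zero => simp
  | succ k ih =>
    simp only [sum_pi_bool_succ, sum_boolSign_cons_mul, boolSign_true, boolSign_false]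
    have ih' := ih fun i => c i.succ
    have h2 := sum_boolSign_sum_mul_sq fun i => c i.succ
    simp only [show ∀ x y : ℝ, (1 * x + y) ^ 4 + (-1 * x + y) ^ 4
        = 2 * y ^ 4 + 12 * x ^ 2 * y ^ 2 + 2 * x ^ 4 from fun x y => by ring,
      sum_add_distrib, ← mul_sum, sum_const, card_univ, Fintype.card_pi,
      Fintype.card_bool, prod_const, Fintype.card_fin, nsmul_eq_mul, h2, Fin.sum_univ_succ]
    have hQ : 0 ≤ ∑ i : Fin k, c i.succ ^ 2 := sum_nonneg fun i _ => sq_nonneg _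
    have hc : (0:ℝ) ≤ 2 ^ k * c 0 ^ 4 := by positivity
    have hcQ : (0:ℝ) ≤ 2 ^ k * (c 0 ^ 2 * ∑ i : Fin k, c i.succ ^ 2) := by positivity
    push_cast
    rw [show (2:ℝ) ^ (k + 1) = 2 * 2 ^ k by ring]
    nlinarith [ih']

/-- Hölder's `‖f‖₂ ≤ ‖f‖₁ ^ (1/3) * ‖f‖₄ ^ (2/3)`, from two applications of Cauchy–Schwarz. -/
lemma sum_sq_pow_three_le {α : Type*} (s : Finset α) (f : α → ℝ) :
    (∑ i ∈ s, f i ^ 2) ^ 3 ≤ (∑ i ∈ s, |f i|) ^ 2 * ∑ i ∈ s, f i ^ 4 := by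
  set A := ∑ i ∈ s, f i ^ 2
  set L := ∑ i ∈ s, |f i|
  set B := ∑ i ∈ s, |f i| ^ 3
  set M := ∑ i ∈ s, f i ^ 4
  have hAB : A ^ 2 ≤ L * B := sum_sq_le_sum_mul_sum_of_sq_le_mul s
    (fun i _ => abs_nonneg _) (fun i _ => by positivity) fun i _ => le_of_eq <| by
      rw [← sq_abs (f i)]; ring
  have hBM : B ^ 2 ≤ A * M := sum_sq_le_sum_mul_sum_of_sq_le_mul s
    (fun i _ => sq_nonneg _) (fun i _ => by positivity) fun i _ => le_of_eq <| by
      rw [show f i ^ 4 = (f i ^ 2) ^ 2 by ring, ← sq_abs (f i)]; ring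
  have hA : 0 ≤ A := sum_nonneg fun i _ => sq_nonneg _
  have hA4 : A * A ^ 3 ≤ A * (L ^ 2 * M) := calc
    A * A ^ 3 = (A ^ 2) ^ 2 := by ring
    _ ≤ (L * B) ^ 2 := pow_le_pow_left₀ (sq_nonneg A) hAB 2
    _ = L ^ 2 * B ^ 2 := by ring
    _ ≤ L ^ 2 * (A * M) := mul_le_mul_of_nonneg_left hBM (sq_nonneg L)
    _ = A * (L ^ 2 * M) := by ring
  rcases hA.eq_or_lt with hA0 | hApos
  · rw [← hA0]; simp only [ne_eq, OfNat.ofNat_ne_zero, not_false_eq_true, zero_pow]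
    exact mul_nonneg (sq_nonneg L) (sum_nonneg fun i _ => by positivity)
  · exact le_of_mul_le_mul_left hA4 hApos

theorem khintchine_l1 {k : ℕ} (c : Fin k → ℝ) :
    2 ^ k * √(∑ i, c i ^ 2) ≤ √3 * ∑ s : Fin k → Bool, |∑ i, boolSign (s i) * c i| := by
  set Q := ∑ i, c i ^ 2
  set L := ∑ s : Fin k → Bool, |∑ i, boolSign (s i) * c i|
  have hQ : 0 ≤ Q := sum_nonneg fun i _ => sq_nonneg _
  have hL : 0 ≤ L := sum_nonneg fun s _ => abs_nonneg _
  have hpow : (2 ^ k * Q) ^ 3 ≤ L ^ 2 * (3 * 2 ^ k * Q ^ 2) := by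
    have h := sum_sq_pow_three_le univ fun s : Fin k → Bool => ∑ i, boolSign (s i) * c i
    rw [sum_boolSign_sum_mul_sq] at h
    exact h.trans (mul_le_mul_of_nonneg_left (sum_boolSign_sum_mul_pow_four_le c) (sq_nonneg L))
  have hsq : 2 ^ (2 * k) * Q ≤ 3 * L ^ 2 := by
    rcases hQ.eq_or_lt with hQ0 | hQpos
    · rw [← hQ0, mul_zero]; positivity
    · have : (0:ℝ) < 2 ^ k * Q ^ 2 := by positivity
      refine le_of_mul_le_mul_right ?_ this
      calc 2 ^ (2 * k) * Q * (2 ^ k * Q ^ 2) = (2 ^ k * Q) ^ 3 := by ring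
        _ ≤ L ^ 2 * (3 * 2 ^ k * Q ^ 2) := hpow
        _ = 3 * L ^ 2 * (2 ^ k * Q ^ 2) := by ring
  rw [← pow_le_pow_iff_left₀ (by positivity) (by positivity) two_ne_zero, mul_pow, mul_pow,
    Real.sq_sqrt hQ, Real.sq_sqrt zero_le_three, ← pow_mul, mul_comm k]
  exact hsq

lemma sum_sq_mul_abs_le (a x : ι → ℝ) :
    ∑ i, a i ^ 2 * |x i| ≤ √(∑ i, a i ^ 2) * √(∑ i, (a i * x i) ^ 2) := by
  calc ∑ i, a i ^ 2 * |x i| = ∑ i, |a i| * |a i * x i| := by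
        simp only [abs_mul, ← mul_assoc, ← sq, sq_abs]
    _ ≤ √(∑ i, |a i| ^ 2) * √(∑ i, |a i * x i| ^ 2) := Real.sum_mul_le_sqrt_mul_sqrt _ _ _
    _ = √(∑ i, a i ^ 2) * √(∑ i, (a i * x i) ^ 2) := by simp only [sq_abs]

lemma MeasureTheory.MeasurePreserving.integral_comp_of_aestronglyMeasurable
    {α β E : Type*} [MeasurableSpace α] [MeasurableSpace β] [NormedAddCommGroup E]
    [NormedSpace ℝ E] {μ : Measure α} {ν : Measure β} {f : α → β} (hf : MeasurePreserving f μ ν)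
    {g : β → E} (hg : AEStronglyMeasurable g ν) :
    ∫ x, g (f x) ∂μ = ∫ y, g y ∂ν := by
  rw [← hf.map_eq] at hg ⊢
  exact (integral_map hf.measurable.aemeasurable hg).symm

lemma measurePreserving_boolSign_mul (ρ : Measure ℝ) [ρ.IsNegInvariant] (b : Bool) :
    MeasurePreserving (boolSign b * ·) ρ ρ := by
  cases b
  · simpa [neg_one_mul] using Measure.measurePreserving_neg ρ
  · simp only [boolSign_true, one_mul]
    exact MeasurePreserving.id ρ

lemma measurable_abs_sum_mul (a : ι → ℝ) : Measurable fun x : ι → ℝ => |∑ i, a i * x i| := by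
  fun_prop

lemma integrable_sum_mul_eval {ρ : Measure ℝ} [IsFiniteMeasure ρ] (hρ : Integrable id ρ)
    (a : ι → ℝ) : Integrable (fun x => ∑ i, a i * x i) (Measure.pi fun _ : ι => ρ) :=
  integrable_finsetSum _ fun i _ => (integrable_eval hρ).const_mul (a i)

lemma integrable_abs_eval {ρ : Measure ℝ} [IsFiniteMeasure ρ] (hρ : Integrable id ρ) (i : ι) :
    Integrable (fun x => |x i|) (Measure.pi fun _ : ι => ρ) :=
  integrable_comp_eval hρ.abs

lemma integral_sum_sq_mul_abs_eval {ρ : Measure ℝ} [IsProbabilityMeasure ρ] (hρ : Integrable id ρ)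
    (a : ι → ℝ) :
    ∫ x, ∑ i, a i ^ 2 * |x i| ∂Measure.pi (fun _ => ρ) = (∑ i, a i ^ 2) * ∫ t, |t| ∂ρ := by
  rw [integral_finsetSum _ fun i _ => (integrable_abs_eval hρ i).const_mul _, sum_mul]
  refine sum_congr rfl fun i _ => ?_
  rw [integral_const_mul]
  congr 1
  exact integral_comp_eval continuous_abs.aestronglyMeasurable

lemma integral_abs_sum_boolSign_mul (ρ : Measure ℝ) [SigmaFinite ρ] [ρ.IsNegInvariant]
    (a : ι → ℝ) (s : ι → Bool) :
    ∫ x, |∑ i, boolSign (s i) * (a i * x i)| ∂Measure.pi (fun _ => ρ)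
      = ∫ x, |∑ i, a i * x i| ∂Measure.pi (fun _ => ρ) := by
  have hflip : MeasurePreserving (fun x : ι → ℝ => fun i => boolSign (s i) * x i)
      (Measure.pi fun _ => ρ) (Measure.pi fun _ => ρ) :=
    measurePreserving_pi _ _ fun i => measurePreserving_boolSign_mul ρ (s i)
  simp_rw [mul_left_comm (boolSign _)]
  exact hflip.integral_comp_of_aestronglyMeasurable (measurable_abs_sum_mul a).aestronglyMeasurable

theorem integral_abs_mul_sqrt_le_of_isNegInvariant {k : ℕ} (ρ : Measure ℝ) [IsProbabilityMeasure ρ]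
    [ρ.IsNegInvariant] (hρ : Integrable id ρ) (a : Fin k → ℝ) :
    (∫ t, |t| ∂ρ) * √(∑ i, a i ^ 2) ≤ √3 * ∫ x, |∑ i, a i * x i| ∂Measure.pi (fun _ => ρ) := by
  set π := Measure.pi fun _ : Fin k => ρ
  set Q := ∑ i, a i ^ 2
  set I := ∫ x, |∑ i, a i * x i| ∂π
  have hsigned : ∀ s : Fin k → Bool,
      Integrable (fun x => |∑ i, boolSign (s i) * (a i * x i)|) π := fun s => by
    simp_rw [← mul_assoc]
    exact (integrable_sum_mul_eval hρ _).abs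
  have hpointwise : ∀ x : Fin k → ℝ, 2 ^ k * ∑ i, a i ^ 2 * |x i|
      ≤ √3 * √Q * ∑ s : Fin k → Bool, |∑ i, boolSign (s i) * (a i * x i)| := fun x => calc
    2 ^ k * ∑ i, a i ^ 2 * |x i| ≤ 2 ^ k * (√Q * √(∑ i, (a i * x i) ^ 2)) :=
      mul_le_mul_of_nonneg_left (sum_sq_mul_abs_le a x) (by positivity)
    _ = √Q * (2 ^ k * √(∑ i, (a i * x i) ^ 2)) := by ring
    _ ≤ √Q * (√3 * ∑ s : Fin k → Bool, |∑ i, boolSign (s i) * (a i * x i)|) :=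
      mul_le_mul_of_nonneg_left (khintchine_l1 _) (Real.sqrt_nonneg _)
    _ = _ := by ring
  have hintegrated : 2 ^ k * (Q * ∫ t, |t| ∂ρ) ≤ √3 * √Q * (2 ^ k * I) := by
    have h := integral_mono
      ((integrable_finsetSum _ fun i _ => (integrable_abs_eval hρ i).const_mul _).const_mul _)
      ((integrable_finsetSum _ fun s _ => hsigned s).const_mul _) hpointwise
    rwa [integral_const_mul, integral_const_mul, integral_sum_sq_mul_abs_eval hρ,
      integral_finsetSum _ fun s _ => hsigned s,
      sum_congr rfl fun s _ => integral_abs_sum_boolSign_mul ρ a s, sum_const, card_univ,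
      Fintype.card_pi, Fintype.card_bool, prod_const, card_univ, Fintype.card_fin, nsmul_eq_mul,
      Nat.cast_pow, Nat.cast_ofNat] at h
  rcases (Real.sqrt_nonneg Q).eq_or_lt with hQ | hQ
  · rw [← hQ, mul_zero]
    exact mul_nonneg (Real.sqrt_nonneg 3) (integral_nonneg fun x => abs_nonneg _)
  · refine le_of_mul_le_mul_left ?_ (by positivity : 0 < 2 ^ k * √Q)
    calc 2 ^ k * √Q * ((∫ t, |t| ∂ρ) * √Q) = 2 ^ k * (Q * ∫ t, |t| ∂ρ) := by
          linear_combination (2 ^ k * ∫ t, |t| ∂ρ) *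
            Real.mul_self_sqrt (sum_nonneg fun i _ => sq_nonneg (a i) : 0 ≤ Q)
      _ ≤ √3 * √Q * (2 ^ k * I) := hintegrated
      _ = 2 ^ k * √Q * (√3 * I) := by ring

noncomputable def symmetrization (ν : Measure ℝ) : Measure ℝ := (ν.prod ν).map fun z => z.1 - z.2

instance (ν : Measure ℝ) [IsProbabilityMeasure ν] : IsProbabilityMeasure (symmetrization ν) :=
  Measure.isProbabilityMeasure_map (by fun_prop)

instance (ν : Measure ℝ) [SFinite ν] : (symmetrization ν).IsNegInvariant := by
  refine ⟨?_⟩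
  rw [Measure.neg_def, symmetrization, Measure.map_map measurable_neg (by fun_prop)]
  have hswap : (Neg.neg ∘ fun z : ℝ × ℝ => z.1 - z.2) = (fun z => z.1 - z.2) ∘ Prod.swap := by
    funext z; simp
  rw [hswap, ← Measure.map_map (by fun_prop) measurable_swap, Measure.prod_swap]

lemma measurePreserving_sub_symmetrization (ν : Measure ℝ) :
    MeasurePreserving (fun z : ℝ × ℝ => z.1 - z.2) (ν.prod ν) (symmetrization ν) :=
  ⟨by fun_prop, rfl⟩

variable {ν : Measure ℝ} [IsProbabilityMeasure ν]

lemma integrable_id_symmetrization (hν : Integrable id ν) : Integrable id (symmetrization ν) := by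
  rw [← (measurePreserving_sub_symmetrization ν).integrable_comp aestronglyMeasurable_id]
  exact (hν.comp_fst ν).sub (hν.comp_snd ν)

lemma integral_abs_le_integral_abs_symmetrization (hν : Integrable id ν)
    (hmean : ∫ x, x ∂ν = 0) : ∫ x, |x| ∂ν ≤ ∫ x, |x| ∂symmetrization ν := by
  have hsub : Integrable (fun z : ℝ × ℝ => |z.1 - z.2|) (ν.prod ν) :=
    ((hν.comp_fst ν).sub (hν.comp_snd ν)).abs
  have hcentered : ∀ x : ℝ, |x| ≤ ∫ y, |x - y| ∂ν := fun x => calc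
    |x| = |∫ y, (x - y) ∂ν| := by
      rw [integral_sub (g := fun y => y) (integrable_const x) hν, hmean]; simp
    _ ≤ ∫ y, |x - y| ∂ν := abs_integral_le_integral_abs
  calc ∫ x, |x| ∂ν ≤ ∫ x, ∫ y, |x - y| ∂ν ∂ν :=
        integral_mono hν.abs hsub.integral_prod_left hcentered
    _ = ∫ z, |z.1 - z.2| ∂ν.prod ν := (integral_prod _ hsub).symm
    _ = ∫ x, |x| ∂symmetrization ν :=
      (measurePreserving_sub_symmetrization ν).integral_comp_of_aestronglyMeasurable
        continuous_abs.aestronglyMeasurable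

lemma integral_abs_sum_symmetrization_le (hν : Integrable id ν) (a : ι → ℝ) :
    ∫ x, |∑ i, a i * x i| ∂Measure.pi (fun _ => symmetrization ν)
      ≤ 2 * ∫ x, |∑ i, a i * x i| ∂Measure.pi (fun _ => ν) := by
  set πκ := Measure.pi fun _ : ι => ν.prod ν
  have hsub : MeasurePreserving (fun z : ι → ℝ × ℝ => fun i => (z i).1 - (z i).2) πκ
      (Measure.pi fun _ => symmetrization ν) :=
    measurePreserving_pi _ _ fun _ => measurePreserving_sub_symmetrization ν
  have hfst : MeasurePreserving (fun z : ι → ℝ × ℝ => fun i => (z i).1) πκ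
      (Measure.pi fun _ => ν) := measurePreserving_pi _ _ fun _ => measurePreserving_fst
  have hsnd : MeasurePreserving (fun z : ι → ℝ × ℝ => fun i => (z i).2) πκ
      (Measure.pi fun _ => ν) := measurePreserving_pi _ _ fun _ => measurePreserving_snd
  have hmeas := measurable_abs_sum_mul a
  have hS := (integrable_sum_mul_eval hν a).abs
  have hS1 : Integrable (fun z : ι → ℝ × ℝ => |∑ i, a i * (z i).1|) πκ :=
    hfst.integrable_comp_of_integrable hS
  have hS2 : Integrable (fun z : ι → ℝ × ℝ => |∑ i, a i * (z i).2|) πκ :=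
    hsnd.integrable_comp_of_integrable hS
  have htriangle : ∀ z : ι → ℝ × ℝ, |∑ i, a i * ((z i).1 - (z i).2)|
      ≤ |∑ i, a i * (z i).1| + |∑ i, a i * (z i).2| := fun z => by
    simp only [mul_sub, sum_sub_distrib]
    exact abs_sub _ _
  calc ∫ x, |∑ i, a i * x i| ∂Measure.pi (fun _ => symmetrization ν)
      = ∫ z, |∑ i, a i * ((z i).1 - (z i).2)| ∂πκ :=
        (hsub.integral_comp_of_aestronglyMeasurable hmeas.aestronglyMeasurable).symm
    _ ≤ ∫ z, (|∑ i, a i * (z i).1| + |∑ i, a i * (z i).2|) ∂πκ :=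
        integral_mono ((hsub.integrable_comp_of_integrable
          (integrable_sum_mul_eval (integrable_id_symmetrization hν) a).abs)) (hS1.add hS2)
          htriangle
    _ = 2 * ∫ x, |∑ i, a i * x i| ∂Measure.pi (fun _ => ν) := by
      rw [integral_add hS1 hS2,
        hfst.integral_comp_of_aestronglyMeasurable hmeas.aestronglyMeasurable,
        hsnd.integral_comp_of_aestronglyMeasurable hmeas.aestronglyMeasurable]
      ring

theorem integral_abs_mul_sqrt_le_integral_abs_sum {k : ℕ} (hν : Integrable id ν)
    (hmean : ∫ x, x ∂ν = 0) (a : Fin k → ℝ) :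
    (∫ x, |x| ∂ν) * √(∑ i, a i ^ 2)
      ≤ 2 * √3 * ∫ x, |∑ i, a i * x i| ∂Measure.pi (fun _ => ν) := calc
  (∫ x, |x| ∂ν) * √(∑ i, a i ^ 2) ≤ (∫ x, |x| ∂symmetrization ν) * √(∑ i, a i ^ 2) :=
    mul_le_mul_of_nonneg_right (integral_abs_le_integral_abs_symmetrization hν hmean)
      (Real.sqrt_nonneg _)
  _ ≤ √3 * ∫ x, |∑ i, a i * x i| ∂Measure.pi (fun _ => symmetrization ν) :=
    integral_abs_mul_sqrt_le_of_isNegInvariant _ (integrable_id_symmetrization hν) a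
  _ ≤ √3 * (2 * ∫ x, |∑ i, a i * x i| ∂Measure.pi (fun _ => ν)) :=
    mul_le_mul_of_nonneg_left (integral_abs_sum_symmetrization_le hν a) (Real.sqrt_nonneg 3)
  _ = 2 * √3 * ∫ x, |∑ i, a i * x i| ∂Measure.pi (fun _ => ν) := by ring

lemma map_fun_eq_pi_of_iIndepFun_of_identDistrib {Ω β : Type*} [MeasurableSpace Ω]
    [MeasurableSpace β] {μ : Measure Ω} [IsProbabilityMeasure μ] {ξ : ι → Ω → β} {X : Ω → β}
    (hind : iIndepFun ξ μ) (hid : ∀ i, IdentDistrib (ξ i) X μ μ) :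
    μ.map (fun ω i => ξ i ω) = Measure.pi fun _ => μ.map X := by
  rw [(iIndepFun_iff_map_fun_eq_pi_map fun i => (hid i).aemeasurable_fst).mp hind]
  simp_rw [fun i => (hid i).map_eq]

theorem integral_abs_mul_sqrt_le_integral_abs_weighted_sum {Ω : Type*} [MeasurableSpace Ω]
    {μ : Measure Ω} [IsProbabilityMeasure μ] {ξ : ℕ → Ω → ℝ} (hind : iIndepFun ξ μ)
    (hid : ∀ i, IdentDistrib (ξ i) (ξ 0) μ μ) (hint : Integrable (ξ 0) μ)
    (hmean : ∫ ω, ξ 0 ω ∂μ = 0) (k : ℕ) (a : ℕ → ℝ) :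
    (∫ ω, |ξ 0 ω| ∂μ) * √(∑ i ∈ range k, a i ^ 2)
      ≤ 2 * √3 * ∫ ω, |∑ i ∈ range k, a i * ξ i ω| ∂μ := by
  have hmeas : AEMeasurable (ξ 0) μ := hint.aemeasurable
  have : IsProbabilityMeasure (μ.map (ξ 0)) := Measure.isProbabilityMeasure_map hmeas
  have hjoint : μ.map (fun ω (i : Fin k) => ξ i ω) = Measure.pi fun _ => μ.map (ξ 0) :=
    map_fun_eq_pi_of_iIndepFun_of_identDistrib (hind.precomp Fin.val_injective) fun i => hid i
  have hν : Integrable id (μ.map (ξ 0)) :=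
    (integrable_map_measure aestronglyMeasurable_id hmeas).mpr hint
  have hνmean : ∫ x, x ∂μ.map (ξ 0) = 0 := by
    rwa [integral_map hmeas (f := fun x : ℝ => x) aestronglyMeasurable_id]
  have h := integral_abs_mul_sqrt_le_integral_abs_sum hν hνmean fun i : Fin k => a i
  rw [← hjoint, integral_map (φ := fun ω (i : Fin k) => ξ i ω)
      (aemeasurable_pi_lambda _ fun i => (hid i).aemeasurable_fst)
      (measurable_abs_sum_mul _).aestronglyMeasurable,
    integral_map hmeas continuous_abs.aestronglyMeasurable, Fin.sum_univ_eq_sum_range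
      (fun i => a i ^ 2)] at h
  simpa only [fun ω => Fin.sum_univ_eq_sum_range (fun i => a i * ξ i ω) k] using h

theorem marcinkiewicz_zygmund_lower_bound :
    ∃ C : ℝ, 0 < C ∧
      ∀ (p : ℝ), 1 ≤ p → p < 2 →
      ∀ (Ω : Type) [MeasureSpace Ω] [IsProbabilityMeasure (ℙ : Measure Ω)]
        (ξ : ℕ → Ω → ℝ),
        iIndepFun ξ ℙ →
        (∀ i, IdentDistrib (ξ i) (ξ 0) ℙ ℙ) →
        (∫ ω, ξ 0 ω) = 0 →
        MemLp (ξ 0) 2 ℙ →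
        ∀ (k : ℕ) (a : ℕ → ℝ),
          C * (eLpNorm (ξ 0) 1 ℙ).toReal * Real.sqrt (∑ i ∈ Finset.range k, (a i) ^ 2) ≤
            (eLpNorm (fun ω => ∑ i ∈ Finset.range k, a i * ξ i ω) (ENNReal.ofReal p) ℙ).toReal := by
  refine ⟨(2 * √3)⁻¹, by positivity, fun p hp1 hp2 Ω _ _ ξ hind hid hmean hL2 k a => ?_⟩
  set S := fun ω => ∑ i ∈ range k, a i * ξ i ω
  have hint : Integrable (ξ 0) ℙ := hL2.integrable one_le_two
  have hS : MemLp S 2 ℙ :=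
    memLp_finsetSum _ fun i _ => ((hid i).symm.memLp_snd hL2).const_mul (a i)
  have hp : (1 : ENNReal) ≤ ENNReal.ofReal p ∧ ENNReal.ofReal p ≤ 2 :=
    ⟨ENNReal.one_le_ofReal.mpr hp1, by simpa using ENNReal.ofReal_le_ofReal hp2.le⟩
  calc (2 * √3)⁻¹ * (eLpNorm (ξ 0) 1 ℙ).toReal * √(∑ i ∈ range k, a i ^ 2)
      = (2 * √3)⁻¹ * ((∫ ω, |ξ 0 ω|) * √(∑ i ∈ range k, a i ^ 2)) := by
        rw [toReal_eLpNorm hint.aestronglyMeasurable,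
          lpNorm_one_eq_integral_norm hint.aestronglyMeasurable]
        simp only [Real.norm_eq_abs, mul_assoc]
    _ ≤ (2 * √3)⁻¹ * (2 * √3 * ∫ ω, |S ω|) := mul_le_mul_of_nonneg_left
        (integral_abs_mul_sqrt_le_integral_abs_weighted_sum hind hid hint hmean k a) (by positivity)
    _ = (eLpNorm S 1 ℙ).toReal := by
        rw [toReal_eLpNorm hS.aestronglyMeasurable,
          lpNorm_one_eq_integral_norm hS.aestronglyMeasurable]
        field_simp
        simp only [Real.norm_eq_abs]
    _ ≤ (eLpNorm S (ENNReal.ofReal p) ℙ).toReal :=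
        ENNReal.toReal_mono (hS.mono_exponent hp.2).eLpNorm_ne_top
          (eLpNorm_le_eLpNorm_of_exponent_le hp.1 hS.aestronglyMeasurable)
end

section
/- Let 1 ≤ p < 2 and let S be the set of mean-zero, finite-variance probability measures on ℝ with the quantile-L² metric d. For ν, λ ∈ S, i.i.d. sequences (ξ_k^{(ν)}), (ξ_k^{(λ)}) with respective laws ν and λ, any n ≥ 1, real t, a₁,…,a_n: | ‖t + ∑_{k=1}^n a_k ξ_k^{(ν)}‖_p − ‖t + ∑_{k=1}^n a_k ξ_k^{(λ)}‖_p | ≤ d(ν,λ) · (∑_{k=1}^n a_k²)^{1/2}. -/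
open MeasureTheory ProbabilityTheory

/-- The quantile function (generalized inverse of the distribution function) of a
probability measure on `ℝ`. -/
noncomputable def quantile (ν : Measure ℝ) (x : ℝ) : ℝ :=
  sInf {t : ℝ | x ≤ (ν (Set.Iic t)).toReal}

/-- The quantile-`L²` distance between two probability measures on `ℝ`. -/
noncomputable def qdist (ν lam : Measure ℝ) : ℝ :=
  Real.sqrt (∫ x in Set.Ioo (0 : ℝ) 1, (quantile ν x - quantile lam x) ^ 2)

/-!
Both sequences can be realised on the product of `n` copies of the uniform law on `(0, 1)` by the
quantile coupling `ξ_k = F_ν⁻¹(η_k)`, `ξ'_k = F_λ⁻¹(η_k)`, since the `L^p` norms only depend on the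
joint laws. There the reverse triangle inequality and `‖·‖_p ≤ ‖·‖_2` bound the difference of the
norms by the `L²` norm of `∑ a_k δ(η_k)` with `δ = F_ν⁻¹ - F_λ⁻¹`; as `δ(η_k)` are independent and
centred, this norm is `(∑ a_k²)^{1/2} ‖δ‖_{L²(0,1)} = (∑ a_k²)^{1/2} d(ν, λ)`.
-/

open Set

section General

variable {α Ω Ω' ι : Type*} [MeasurableSpace α] [MeasurableSpace Ω] [MeasurableSpace Ω']

lemma abs_toReal_eLpNorm_sub_le {μ : Measure α} {f g : α → ℝ} {q : ENNReal} (hq : 1 ≤ q)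
    (hf : MemLp f q μ) (hg : MemLp g q μ) :
    |(eLpNorm f q μ).toReal - (eLpNorm g q μ).toReal|
      ≤ (eLpNorm (fun x => f x - g x) q μ).toReal := by
  have : Fact (1 ≤ q) := ⟨hq⟩
  rw [← Lp.norm_toLp f hf, ← Lp.norm_toLp g hg]
  exact (abs_norm_sub_norm_le _ _).trans_eq (by rw [← MemLp.toLp_sub hf hg, Lp.norm_toLp]; rfl)

lemma toReal_eLpNorm_two_eq_sqrt_variance {μ : Measure α} {f : α → ℝ} (hf0 : μ[f] = 0) :
    (eLpNorm f 2 μ).toReal = √Var[f; μ] := by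
  rw [variance, evariance, hf0, Real.sqrt_eq_rpow, ENNReal.toReal_rpow,
    eLpNorm_eq_lintegral_rpow_enorm_toReal two_ne_zero ENNReal.ofNat_ne_top]
  simp

lemma identDistrib_pi_of_iIndepFun [Fintype ι] {β : Type*} [MeasurableSpace β]
    {μ : Measure Ω} {μ' : Measure Ω'} [IsProbabilityMeasure μ] [IsProbabilityMeasure μ']
    {f : ι → Ω → β} {g : ι → Ω' → β} (hf : iIndepFun f μ) (hg : iIndepFun g μ')
    (hfg : ∀ i, IdentDistrib (f i) (g i) μ μ') :
    IdentDistrib (fun ω i => f i ω) (fun ω i => g i ω) μ μ' where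
  aemeasurable_fst := aemeasurable_pi_lambda _ fun i => (hfg i).aemeasurable_fst
  aemeasurable_snd := aemeasurable_pi_lambda _ fun i => (hfg i).aemeasurable_snd
  map_eq := by
    rw [hf.map_fun_eq_pi_map fun i => (hfg i).aemeasurable_fst,
      hg.map_fun_eq_pi_map fun i => (hfg i).aemeasurable_snd]
    simp_rw [(hfg _).map_eq]

variable [Fintype ι] {μ : Measure α} [IsProbabilityMeasure μ]

lemma memLp_sum_mul_comp_eval {f : α → ℝ} {p : ENNReal} (hf : MemLp f p μ) (a : ι → ℝ) :
    MemLp (fun v : ι → α => ∑ i, a i * f (v i)) p (Measure.pi fun _ => μ) :=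
  memLp_finsetSum _ fun i _ =>
    (hf.comp_measurePreserving (measurePreserving_eval _ i)).const_mul (a i)

lemma toReal_eLpNorm_two_sum_mul_comp_eval {f : α → ℝ} (hf : MemLp f 2 μ) (hf0 : μ[f] = 0)
    (a : ι → ℝ) :
    (eLpNorm (fun v : ι → α => ∑ i, a i * f (v i)) 2 (Measure.pi fun _ => μ)).toReal
      = √(∑ i, a i ^ 2) * √Var[f; μ] := by
  have hsum0 : ∫ v : ι → α, ∑ i, a i * f (v i) ∂(Measure.pi fun _ => μ) = 0 := by
    rw [integral_finsetSum _ fun i _ => ?_]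
    · simp [integral_const_mul, integral_comp_eval (μ := fun _ => μ) hf.aestronglyMeasurable, hf0]
    exact ((hf.comp_measurePreserving (measurePreserving_eval _ i)).const_mul _).integrable
      one_le_two
  have hvar := variance_sum_pi (μ := fun _ : ι => μ) (fun i => hf.const_mul (a i))
  simp only [variance_const_mul] at hvar
  rw [toReal_eLpNorm_two_eq_sqrt_variance hsum0, ← Real.sqrt_mul (by positivity),
    Finset.sum_mul, ← hvar]
  congr 2
  ext v
  simp

end General

noncomputable def uniform01 : Measure ℝ := volume.restrict (Ioo 0 1)

instance : IsProbabilityMeasure uniform01 :=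
  ⟨by simp [uniform01]⟩

lemma quantile_le_iff {ν : Measure ℝ} [IsProbabilityMeasure ν] {x t : ℝ} (hx : x ∈ Ioo 0 1) :
    quantile ν x ≤ t ↔ x ≤ cdf ν t := by
  have hset : {s : ℝ | x ≤ (ν (Iic s)).toReal} = {s : ℝ | x ≤ cdf ν s} := by
    simp only [cdf_eq_real, measureReal_def]
  have hne : {s : ℝ | x ≤ cdf ν s}.Nonempty :=
    let ⟨s, hs⟩ := ((tendsto_cdf_atTop (μ := ν)).eventually (eventually_gt_nhds hx.2)).exists
    ⟨s, hs.le⟩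
  have hbdd : BddBelow {s : ℝ | x ≤ cdf ν s} := by
    obtain ⟨s₀, hs₀⟩ :=
      ((tendsto_cdf_atBot (μ := ν)).eventually (eventually_lt_nhds hx.1)).exists
    exact ⟨s₀, fun s hs => le_of_not_gt fun hlt => (hs.trans (monotone_cdf ν hlt.le)).not_gt hs₀⟩
  rw [quantile, hset]
  refine ⟨fun h => ?_, fun h => csInf_le hbdd h⟩
  -- right-continuity of the cdf: `x ≤ cdf ν s` for every `s > t`
  refine ge_of_tendsto (((cdf ν).right_continuous t).mono_left
    (nhdsWithin_mono _ Ioi_subset_Ici_self)) ?_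
  filter_upwards [self_mem_nhdsWithin] with s hs
  obtain ⟨u, hu, hus⟩ := exists_lt_of_csInf_lt hne (h.trans_lt hs)
  exact hu.trans (monotone_cdf ν hus.le)

noncomputable def quantileTransform (ν : Measure ℝ) : ℝ → ℝ :=
  (Ioo 0 1).indicator (quantile ν)

section QuantileTransform

variable (ν : Measure ℝ) [IsProbabilityMeasure ν]

lemma quantileTransform_preimage_Iic (r : ℝ) :
    quantileTransform ν ⁻¹' Iic r =
      (Ioo 0 1 ∩ Iic (cdf ν r)) ∪ ((Ioo 0 1)ᶜ ∩ {_y : ℝ | 0 ≤ r}) := by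
  ext y
  by_cases hy : y ∈ Ioo (0 : ℝ) 1
  · simp [quantileTransform, hy, quantile_le_iff hy]
  · simp [quantileTransform, hy]

lemma measurable_quantileTransform : Measurable (quantileTransform ν) :=
  measurable_of_Iic fun r => by
    rw [quantileTransform_preimage_Iic]
    exact (measurableSet_Ioo.inter measurableSet_Iic).union
      (measurableSet_Ioo.compl.inter (MeasurableSet.const _))

lemma measurePreserving_quantileTransform :
    MeasurePreserving (quantileTransform ν) uniform01 ν := by
  refine ⟨measurable_quantileTransform ν, Measure.ext_of_Iic _ _ fun r => ?_⟩
  have hcap : quantileTransform ν ⁻¹' Iic r ∩ Ioo 0 1 = Ioo 0 1 ∩ Iic (cdf ν r) := by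
    rw [quantileTransform_preimage_Iic]
    ext y
    simp only [mem_union, mem_inter_iff, mem_compl_iff]
    tauto
  rw [Measure.map_apply (measurable_quantileTransform ν) measurableSet_Iic, uniform01,
    Measure.restrict_apply' measurableSet_Ioo, hcap, ← ofReal_cdf]
  refine le_antisymm ?_ ?_
  · calc volume (Ioo 0 1 ∩ Iic (cdf ν r)) ≤ volume (Ioc 0 (cdf ν r)) :=
          measure_mono fun y hy => ⟨hy.1.1, hy.2⟩
      _ = _ := by simp
  · calc ENNReal.ofReal (cdf ν r) = volume (Ioo 0 (cdf ν r)) := by simp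
      _ ≤ volume (Ioo 0 1 ∩ Iic (cdf ν r)) :=
          measure_mono fun y hy => ⟨⟨hy.1, hy.2.trans_le (cdf_le_one ν r)⟩, hy.2.le⟩

lemma memLp_two_quantileTransform (hν2 : Integrable (fun x : ℝ => x ^ 2) ν) :
    MemLp (quantileTransform ν) 2 uniform01 := by
  have hid : MemLp id 2 ν := (memLp_two_iff_integrable_sq aestronglyMeasurable_id).2 hν2
  exact hid.comp_measurePreserving (measurePreserving_quantileTransform ν)

lemma integral_quantileTransform :
    ∫ x, quantileTransform ν x ∂uniform01 = ∫ x, x ∂ν := by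
  conv_rhs => rw [← (measurePreserving_quantileTransform ν).map_eq]
  exact (integral_map (measurable_quantileTransform ν).aemeasurable
    aestronglyMeasurable_id).symm

end QuantileTransform

section Coupling

variable (ν lam : Measure ℝ) [IsProbabilityMeasure ν] [IsProbabilityMeasure lam]

lemma identDistrib_quantileTransform_pi {Ω : Type*} [MeasureSpace Ω]
    [IsProbabilityMeasure (ℙ : Measure Ω)] (ξ : ℕ → Ω → ℝ) (hmξ : ∀ k, Measurable (ξ k))
    (hξindep : iIndepFun ξ ℙ) (hξlaw : ∀ k, Measure.map (ξ k) ℙ = ν) (n : ℕ) :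
    IdentDistrib (fun ω (i : Fin n) => ξ i ω) (fun v i => quantileTransform ν (v i)) ℙ
      (Measure.pi fun _ => uniform01) :=
  identDistrib_pi_of_iIndepFun (hξindep.precomp Fin.val_injective)
    (iIndepFun_pi fun _ => (measurable_quantileTransform ν).aemeasurable) fun i =>
    have hQi := (measurePreserving_quantileTransform ν).comp
      (measurePreserving_eval (fun _ : Fin n => uniform01) i)
    ⟨(hmξ i).aemeasurable, hQi.measurable.aemeasurable, (hξlaw i).trans hQi.map_eq.symm⟩

lemma identDistrib_sum_range_mul_quantileTransform {Ω : Type*} [MeasureSpace Ω]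
    [IsProbabilityMeasure (ℙ : Measure Ω)] (ξ : ℕ → Ω → ℝ) (hmξ : ∀ k, Measurable (ξ k))
    (hξindep : iIndepFun ξ ℙ) (hξlaw : ∀ k, Measure.map (ξ k) ℙ = ν) (n : ℕ) (t : ℝ)
    (a : ℕ → ℝ) :
    IdentDistrib (fun ω => t + ∑ k ∈ Finset.range n, a k * ξ k ω)
      (fun v : Fin n → ℝ => t + ∑ i : Fin n, a i * quantileTransform ν (v i)) ℙ
      (Measure.pi fun _ => uniform01) := by
  have hsum : (fun ω => t + ∑ k ∈ Finset.range n, a k * ξ k ω) =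
      (fun x : Fin n → ℝ => t + ∑ i : Fin n, a i * x i) ∘ fun ω (i : Fin n) => ξ i ω := by
    ext ω
    simp [Fin.sum_univ_eq_sum_range (fun k => a k * ξ k ω) n]
  rw [hsum]
  exact (identDistrib_quantileTransform_pi ν ξ hmξ hξindep hξlaw n).comp (by fun_prop)

lemma abs_toReal_eLpNorm_quantileTransform_sub_le {ι : Type*} [Fintype ι] {q : ENNReal}
    (hq1 : 1 ≤ q) (hq2 : q ≤ 2) (hν0 : ∫ x, x ∂ν = 0) (hlam0 : ∫ x, x ∂lam = 0)
    (hν2 : Integrable (fun x : ℝ => x ^ 2) ν) (hlam2 : Integrable (fun x : ℝ => x ^ 2) lam)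
    (t : ℝ) (a : ι → ℝ) :
    |(eLpNorm (fun v : ι → ℝ => t + ∑ i, a i * quantileTransform ν (v i)) q
          (Measure.pi fun _ => uniform01)).toReal -
        (eLpNorm (fun v : ι → ℝ => t + ∑ i, a i * quantileTransform lam (v i)) q
          (Measure.pi fun _ => uniform01)).toReal|
      ≤ qdist ν lam * √(∑ i, a i ^ 2) := by
  set δ : ℝ → ℝ := fun x => quantileTransform ν x - quantileTransform lam x
  have hQν := memLp_two_quantileTransform ν hν2
  have hQlam := memLp_two_quantileTransform lam hlam2
  have hδ : MemLp δ 2 uniform01 := hQν.sub hQlam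
  have hδ0 : ∫ x, δ x ∂uniform01 = 0 := by
    rw [integral_sub (hQν.integrable one_le_two) (hQlam.integrable one_le_two),
      integral_quantileTransform, integral_quantileTransform, hν0, hlam0, sub_zero]
  have hsum := memLp_sum_mul_comp_eval hδ a
  calc _ ≤ (eLpNorm (fun v : ι → ℝ => (t + ∑ i, a i * quantileTransform ν (v i)) -
          (t + ∑ i, a i * quantileTransform lam (v i))) q (Measure.pi fun _ => uniform01)).toReal :=
        abs_toReal_eLpNorm_sub_le hq1
          (((memLp_const t).add (memLp_sum_mul_comp_eval hQν a)).mono_exponent hq2)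
          (((memLp_const t).add (memLp_sum_mul_comp_eval hQlam a)).mono_exponent hq2)
    _ = (eLpNorm (fun v : ι → ℝ => ∑ i, a i * δ (v i)) q
          (Measure.pi fun _ => uniform01)).toReal := by
        simp_rw [δ, add_sub_add_left_eq_sub, ← Finset.sum_sub_distrib, mul_sub]
    _ ≤ (eLpNorm (fun v : ι → ℝ => ∑ i, a i * δ (v i)) 2
          (Measure.pi fun _ => uniform01)).toReal :=
        ENNReal.toReal_mono hsum.eLpNorm_ne_top
          (eLpNorm_le_eLpNorm_of_exponent_le hq2 hsum.aestronglyMeasurable)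
    _ = √(∑ i, a i ^ 2) * √Var[δ; uniform01] := toReal_eLpNorm_two_sum_mul_comp_eval hδ hδ0 a
    _ = qdist ν lam * √(∑ i, a i ^ 2) := by
        rw [mul_comm, variance_eq_integral hδ.aestronglyMeasurable.aemeasurable, hδ0, qdist,
          uniform01]
        congr 2
        refine setIntegral_congr_fun measurableSet_Ioo fun x hx => ?_
        simp [δ, quantileTransform, hx]

end Coupling

theorem equicontinuity_of_lp_norms_in_law
    {Ω Ω' : Type*} [MeasureSpace Ω] [IsProbabilityMeasure (ℙ : Measure Ω)]
    [MeasureSpace Ω'] [IsProbabilityMeasure (ℙ : Measure Ω')]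
    (p : ℝ) (hp1 : 1 ≤ p) (hp2 : p < 2)
    (ν lam : Measure ℝ) [IsProbabilityMeasure ν] [IsProbabilityMeasure lam]
    (hν0 : (∫ x, x ∂ν) = 0) (hlam0 : (∫ x, x ∂lam) = 0)
    (hν2 : Integrable (fun x : ℝ => x ^ 2) ν)
    (hlam2 : Integrable (fun x : ℝ => x ^ 2) lam)
    (ξ : ℕ → Ω → ℝ) (ξ' : ℕ → Ω' → ℝ)
    (hmξ : ∀ k, Measurable (ξ k)) (hmξ' : ∀ k, Measurable (ξ' k))
    (hξindep : iIndepFun ξ ℙ)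
    (hξ'indep : iIndepFun ξ' ℙ)
    (hξlaw : ∀ k, Measure.map (ξ k) ℙ = ν)
    (hξ'law : ∀ k, Measure.map (ξ' k) ℙ = lam)
    (n : ℕ) (t : ℝ) (a : ℕ → ℝ) :
    |(eLpNorm (fun ω => t + ∑ k ∈ Finset.range n, a k * ξ k ω)
        (ENNReal.ofReal p) ℙ).toReal -
      (eLpNorm (fun ω => t + ∑ k ∈ Finset.range n, a k * ξ' k ω)
        (ENNReal.ofReal p) ℙ).toReal| ≤
      qdist ν lam * Real.sqrt (∑ k ∈ Finset.range n, (a k) ^ 2) := by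
  have hq1 : 1 ≤ ENNReal.ofReal p := ENNReal.one_le_ofReal.2 hp1
  have hq2 : ENNReal.ofReal p ≤ 2 := by
    simpa using ENNReal.ofReal_le_ofReal hp2.le
  rw [(identDistrib_sum_range_mul_quantileTransform ν ξ hmξ hξindep hξlaw n t a).eLpNorm_eq,
    (identDistrib_sum_range_mul_quantileTransform lam ξ' hmξ' hξ'indep hξ'law n t a).eLpNorm_eq,
    ← Fin.sum_univ_eq_sum_range]
  exact abs_toReal_eLpNorm_quantileTransform_sub_le ν lam hq1 hq2 hν0 hlam0 hν2 hlam2 t _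
end
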